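/- Let α₁, α₂ ∈ K∞ and let V : ℝⁿ × [0,∞) → [0,∞) satisfy α₁(|x|) ≤ V(x,t) ≤ α₂(|x|) for all x, t. Let γ ∈ K∞ satisfy γ(s) ≤ α₁(α₂⁻¹(s))/2 for all s ≥ 0, and let F : ℝⁿ × ℤ≥0 → ℝⁿ satisfy |F(x,k)| ≤ α₂⁻¹(α₁(|x|)/2) for all x, k. Let p : ℤ≥0 → {0,1}. Define F_p(x,k) = (1 - p(k+1))x + p(k+1)F(x,k). Then V(F_p(x,k), t) - V(x,t) ≤ -p(k+1)γ(V(x,t)) for all x ∈ ℝⁿ, t ≥ 0, k ∈ ℤ≥0. -/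

import Mathlib

/-- A function of class K∞ (viewed on `[0,∞)`): continuous, strictly increasing,
unbounded, and vanishing at `0`. -/
def IsKInf (f : ℝ → ℝ) : Prop :=
  ContinuousOn f (Set.Ici 0) ∧ StrictMonoOn f (Set.Ici 0) ∧ f 0 = 0 ∧
    ∀ M : ℝ, ∃ x, 0 ≤ x ∧ M ≤ f x

namespace IsKInf

variable {f : ℝ → ℝ}

theorem nonneg (hf : IsKInf f) {x : ℝ} (hx : 0 ≤ x) : 0 ≤ f x :=
  hf.2.2.1 ▸ hf.2.1.monotoneOn Set.self_mem_Ici hx hx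

theorem le_iff_le (hf : IsKInf f) {a b : ℝ} (ha : 0 ≤ a) (hb : 0 ≤ b) :
    f a ≤ f b ↔ a ≤ b :=
  hf.2.1.le_iff_le ha hb

theorem rightInverse_le_iff (hf : IsKInf f) {g : ℝ → ℝ} {s r : ℝ}
    (hg : 0 ≤ g s) (hfg : f (g s) = s) (hr : 0 ≤ r) : g s ≤ r ↔ s ≤ f r := by
  rw [← hf.le_iff_le hg hr, hfg]

theorem le_rightInverse_iff (hf : IsKInf f) {g : ℝ → ℝ} {s r : ℝ}
    (hg : 0 ≤ g s) (hfg : f (g s) = s) (hr : 0 ≤ r) : r ≤ g s ↔ f r ≤ s := by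
  rw [← hf.le_iff_le hr hg, hfg]

end IsKInf

theorem le_sub_of_norm_le_inv_half {E : Type*} [SeminormedAddGroup E] (V : E → ℝ)
    {α₁ α₂ α₂inv γ : ℝ → ℝ} (hα₁ : IsKInf α₁) (hα₂ : IsKInf α₂)
    (hinv : ∀ s ≥ (0 : ℝ), 0 ≤ α₂inv s ∧ α₂ (α₂inv s) = s)
    (hsand : ∀ x, α₁ ‖x‖ ≤ V x ∧ V x ≤ α₂ ‖x‖)
    (hγle : ∀ s ≥ (0 : ℝ), γ s ≤ α₁ (α₂inv s) / 2)
    {x y : E} (hy : ‖y‖ ≤ α₂inv (α₁ ‖x‖ / 2)) : V y ≤ V x - γ (V x) := by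
  have hα₁x : 0 ≤ α₁ ‖x‖ := hα₁.nonneg (norm_nonneg x)
  have hVx : 0 ≤ V x := hα₁x.trans (hsand x).1
  have hVy : V y ≤ α₁ ‖x‖ / 2 := by
    obtain ⟨hinv_nonneg, hinv_eq⟩ := hinv (α₁ ‖x‖ / 2) (by linarith)
    exact (hsand y).2.trans
      ((hα₂.le_rightInverse_iff hinv_nonneg hinv_eq (norm_nonneg y)).1 hy)
  have hγVx : γ (V x) ≤ α₁ ‖x‖ / 2 := by
    obtain ⟨hinv_nonneg, hinv_eq⟩ := hinv _ hVx
    have hinv_le : α₂inv (V x) ≤ ‖x‖ :=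
      (hα₂.rightInverse_le_iff hinv_nonneg hinv_eq (norm_nonneg x)).2 (hsand x).2
    have := (hα₁.le_iff_le hinv_nonneg (norm_nonneg x)).2 hinv_le
    linarith [hγle _ hVx]
  linarith [(hsand x).1]

theorem stmt12_general (n : ℕ)
    (F : EuclideanSpace ℝ (Fin n) → ℕ → EuclideanSpace ℝ (Fin n))
    (V : EuclideanSpace ℝ (Fin n) → ℝ → ℝ)
    (α₁ α₂ α₂inv γ : ℝ → ℝ) (hα₁ : IsKInf α₁) (hα₂ : IsKInf α₂)
    (hinv₂ : ∀ s ≥ (0 : ℝ), 0 ≤ α₂inv s ∧ α₂ (α₂inv s) = s ∧ α₂inv (α₂ s) = s)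
    (hsand : ∀ x t, 0 ≤ t → α₁ ‖x‖ ≤ V x t ∧ V x t ≤ α₂ ‖x‖)
    (hγle : ∀ s ≥ (0 : ℝ), γ s ≤ α₁ (α₂inv s) / 2)
    (hF : ∀ x k, ‖F x k‖ ≤ α₂inv (α₁ ‖x‖ / 2))
    (p : ℕ → ℝ) (hp : ∀ k, p k = 0 ∨ p k = 1) :
    ∀ (x : EuclideanSpace ℝ (Fin n)) (t : ℝ), 0 ≤ t → ∀ k : ℕ,
      V ((1 - p (k + 1)) • x + p (k + 1) • F x k) t - V x t
        ≤ -p (k + 1) * γ (V x t) := by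
  intro x t ht k
  rcases hp (k + 1) with hp0 | hp1
  · simp [hp0]
  · have hjump := le_sub_of_norm_le_inv_half (V · t) hα₁ hα₂
      (fun s hs => ⟨(hinv₂ s hs).1, (hinv₂ s hs).2.1⟩) (fun x => hsand x t ht) hγle (hF x k)
    simp only [hp1, sub_self, zero_smul, one_smul, zero_add]
    linarith

/-- Hybrid example from Section 6. With
`α₁(|x|) ≤ V(x,t) ≤ α₂(|x|)`, `γ(s) ≤ α₁(α₂⁻¹(s))/2`,
`|F(x,k)| ≤ α₂⁻¹(α₁(|x|)/2)`, and `p` valued in `{0,1}`, the dynamics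
`F_p(x,k) = (1-p(k+1))x + p(k+1)F(x,k)` satisfies
`V(F_p(x,k),t) - V(x,t) ≤ -p(k+1)γ(V(x,t))`. -/
theorem stmt12 (n : ℕ)
    (F : EuclideanSpace ℝ (Fin n) → ℕ → EuclideanSpace ℝ (Fin n))
    (V : EuclideanSpace ℝ (Fin n) → ℝ → ℝ)
    (α₁ α₂ α₂inv γ : ℝ → ℝ) (hα₁ : IsKInf α₁) (hα₂ : IsKInf α₂) (hγ : IsKInf γ)
    (hinv₂ : ∀ s ≥ (0 : ℝ), 0 ≤ α₂inv s ∧ α₂ (α₂inv s) = s ∧ α₂inv (α₂ s) = s)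
    (hsand : ∀ x t, 0 ≤ t → α₁ ‖x‖ ≤ V x t ∧ V x t ≤ α₂ ‖x‖)
    (hγle : ∀ s ≥ (0 : ℝ), γ s ≤ α₁ (α₂inv s) / 2)
    (hF : ∀ x k, ‖F x k‖ ≤ α₂inv (α₁ ‖x‖ / 2))
    (p : ℕ → ℝ) (hp : ∀ k, p k = 0 ∨ p k = 1) :
    ∀ (x : EuclideanSpace ℝ (Fin n)) (t : ℝ), 0 ≤ t → ∀ k : ℕ,
      V ((1 - p (k + 1)) • x + p (k + 1) • F x k) t - V x t
        ≤ -p (k + 1) * γ (V x t) :=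
  stmt12_general n F V α₁ α₂ α₂inv γ hα₁ hα₂ hinv₂ hsand hγle hF p hp
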